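/- arXiv:1403.6877 — 2 statements merged into one kernel-verified Lean document; each statement's English description precedes it below -/
import Mathlib

section
/- Let q ∈ (0,1). For distinct z, w ∈ ℂ\{1}, the function u(n_1,n_2) = (w - qz)/(w - z)·(1-z)^{-n_1}(1-w)^{-n_2} + (z - qw)/(z - w)·(1-w)^{-n_1}(1-z)^{-n_2}, defined for n_1, n_2 ∈ ℤ, satisfies (∇_1 - q∇_2)u |_{n_1 = n_2} = 0, where (∇_i u)(n) = u(n with n_i ↦ n_i - 1) - u(n). -/
/-- The two-particle Bethe wavefunction for the q-Boson process satisfies the boundary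
condition `(∇_1 - q∇_2)u = 0` on the diagonal `n_1 = n_2`. -/
theorem stmt_12 (q : ℝ) (hq : q ∈ Set.Ioo (0:ℝ) 1) (z w : ℂ)
    (hz : z ≠ 1) (hw : w ≠ 1) (hzw : z ≠ w) (m : ℤ) :
    let u : ℤ → ℤ → ℂ := fun n1 n2 =>
      (w - (q:ℂ) * z) / (w - z) * (1 - z) ^ (-n1) * (1 - w) ^ (-n2)
        + (z - (q:ℂ) * w) / (z - w) * (1 - w) ^ (-n1) * (1 - z) ^ (-n2)
    (u (m-1) m - u m m) - (q:ℂ) * (u m (m-1) - u m m) = 0 := by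
  intro u
  have hz0 : (1 - z) ≠ 0 := sub_ne_zero.mpr (Ne.symm hz)
  have hw0 : (1 - w) ≠ 0 := sub_ne_zero.mpr (Ne.symm hw)
  have hwz : w - z ≠ 0 := sub_ne_zero.mpr (Ne.symm hzw)
  have hzw' : z - w ≠ 0 := sub_ne_zero.mpr hzw
  have hez : (1 - z) ^ (-(m-1)) = (1 - z) * (1 - z) ^ (-m) := by
    rw [show -(m-1) = 1 + -m by ring, zpow_add₀ hz0, zpow_one]
  have hew : (1 - w) ^ (-(m-1)) = (1 - w) * (1 - w) ^ (-m) := by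
    rw [show -(m-1) = 1 + -m by ring, zpow_add₀ hw0, zpow_one]
  have key : (w - (q:ℂ)*z)/(w-z)*z + (z - (q:ℂ)*w)/(z-w)*w
      - (q:ℂ)*((w - (q:ℂ)*z)/(w-z)*w + (z - (q:ℂ)*w)/(z-w)*z) = 0 := by
    field_simp
    ring
  simp only [u, hez, hew]
  linear_combination (-(1-z)^(-m)*(1-w)^(-m)) * key
end

section
/- Let q ∈ (0,1) and let L be the free q-Boson generator acting on u : ℤ^k → ℂ by (Lu)(n) = (1-q)∑_i (∇_i u)(n) with (∇_i u)(n) = u(n_i ↦ n_i - 1) - u(n). Let H be the q-Boson generator acting on functions of weakly ordered n_1 ≥ ··· ≥ n_k by (Hf)(n) = ∑_{i=1}^m (1-q^{c_i})·(f(n^-_{c_1+···+c_i}) - f(n)), where c_1,...,c_m are the cluster sizes of n and n^-_j decreases the j-th coordinate by 1. If u : ℤ^k → ℂ satisfies the boundary conditions (∇_i - q∇_{i+1})u|_{n_i = n_{i+1}} = 0 for all 1 ≤ i ≤ k-1, then for every weakly ordered n, (Lu)(n) = (Hu)(n) (where u is restricted to the ordered sector on the right-hand side). -/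
open scoped Classical in
/-- Proposition 2.7 of Borodin–Corwin–Sasamoto: if `u : ℤ^k → ℂ` satisfies the
two-body boundary conditions `(∇_i - q∇_{i+1})u|_{n_i = n_{i+1}} = 0`, then on any
weakly ordered `n` the free generator `(Lu)(n) = (1-q)∑_i (∇_i u)(n)` agrees with the
q-Boson generator `(Hu)(n) = ∑_{clusters} (1-q^{c_i})(u(n⁻) - u(n))`. -/
theorem stmt_15 (q : ℝ) (hq : q ∈ Set.Ioo (0:ℝ) 1) (k : ℕ) (hk : 1 ≤ k)
    (u : (Fin k → ℤ) → ℂ)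
    (hbc : ∀ (i : Fin k) (hi : (i:ℕ) + 1 < k) (n : Fin k → ℤ),
      n i = n ⟨(i:ℕ)+1, hi⟩ →
      (u (Function.update n i (n i - 1)) - u n)
        - (q:ℂ) * (u (Function.update n ⟨(i:ℕ)+1, hi⟩ (n ⟨(i:ℕ)+1, hi⟩ - 1)) - u n) = 0)
    (n : Fin k → ℤ) (hord : ∀ i j : Fin k, i ≤ j → n j ≤ n i) :
    (1 - (q:ℂ)) * ∑ i : Fin k, (u (Function.update n i (n i - 1)) - u n)
      = ∑ j ∈ Finset.univ.filter (fun j : Fin k => ∀ i : Fin k, j < i → n i ≠ n j),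
          (1 - (q:ℂ) ^ (Finset.univ.filter (fun i : Fin k => n i = n j)).card) *
            (u (Function.update n j (n j - 1)) - u n) := by
  classical
  set D : Fin k → ℂ := fun i => u (Function.update n i (n i - 1)) - u n with hD
  -- key lemma: within a cluster, D i = q^(j-i) * D j
  have key : ∀ (d : ℕ) (i j : Fin k), (i:ℕ) + d = (j:ℕ) → n i = n j →
      D i = (q:ℂ)^d * D j := by
    intro d
    induction d with
    | zero =>
      intro i j h _
      have : i = j := Fin.ext (by omega)
      simp [this]
    | succ d ih =>
      intro i j h hn
      have hi : (i:ℕ) + 1 < k := by omega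
      set i' : Fin k := ⟨(i:ℕ)+1, hi⟩ with hi'
      have hle1 : i ≤ i' := by simp [hi', Fin.le_def]
      have hle2 : i' ≤ j := by simp [hi', Fin.le_def]; omega
      have h1 : n i = n i' := le_antisymm (hn ▸ hord i' j hle2) (hord i i' hle1)
      have hb := hbc i hi n h1
      have hDi : D i = (q:ℂ) * D i' := by
        rw [hD]; simp only [hi']; linear_combination hb
      have hn' : n i' = n j := by rw [← h1]; exact hn
      rw [hDi, ih i' j (by simp [hi']; omega) hn']
      ring
  set S : Finset (Fin k) :=
    Finset.univ.filter (fun j : Fin k => ∀ i : Fin k, j < i → n i ≠ n j) with hS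
  set C : Fin k → Finset (Fin k) :=
    fun j => Finset.univ.filter (fun i : Fin k => n i = n j) with hC
  have hmemC : ∀ i : Fin k, i ∈ C i := by intro i; simp [hC]
  set fm : Fin k → Fin k := fun i => (C i).max' ⟨i, hmemC i⟩ with hfm
  have hfmC : ∀ i : Fin k, fm i ∈ C i := fun i => (C i).max'_mem _
  have hfm_eq : ∀ i : Fin k, n (fm i) = n i := by
    intro i; have := hfmC i; simpa [hC] using this
  have hfm_max : ∀ i i' : Fin k, n i' = n i → i' ≤ fm i := by
    intro i i' h; exact (C i).le_max' i' (by simp [hC, h])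
  have hfmS : ∀ i : Fin k, fm i ∈ S := by
    intro i
    simp only [hS, Finset.mem_filter, Finset.mem_univ, true_and]
    intro i' hlt hne
    have : i' ≤ fm i := hfm_max i i' (by rw [hne, hfm_eq])
    exact absurd hlt (not_lt.mpr this)
  -- fibers of fm over S are the clusters
  have hfiber : ∀ j ∈ S, Finset.univ.filter (fun i => fm i = j) = C j := by
    intro j hj
    ext i
    simp only [Finset.mem_filter, Finset.mem_univ, true_and, hC]
    constructor
    · intro h; rw [← h, hfm_eq]
    · intro h
      have hjprop : ∀ i' : Fin k, j < i' → n i' ≠ n j := by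
        have := hj; simp only [hS, Finset.mem_filter, Finset.mem_univ, true_and] at this
        exact this
      have hn' : n (fm i) = n j := by rw [hfm_eq i, h]
      have h1 : fm i ≤ j := by
        by_contra hc
        exact hjprop (fm i) (lt_of_not_ge hc) hn'
      exact le_antisymm h1 (hfm_max i j h.symm)
  have hpart : ∑ j ∈ S, ∑ i ∈ Finset.univ.filter (fun i => fm i = j), D i
      = ∑ i : Fin k, D i :=
    Finset.sum_fiberwise_of_maps_to (fun i _ => hfmS i) D
  rw [← hpart, Finset.mul_sum]
  refine Finset.sum_congr rfl ?_
  intro j hj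
  rw [hfiber j hj]
  -- now: (1-q) * ∑_{i ∈ C j} D i = (1 - q^card) * D j
  have hjS := (Finset.mem_filter.mp (hS ▸ hj)).2
  have hleJ : ∀ i ∈ C j, i ≤ j := by
    intro i hi
    by_contra hlt
    exact hjS i (lt_of_not_ge hlt) (by simpa [hC] using hi)
  -- min of cluster
  set a : Fin k := (C j).min' ⟨j, hmemC j⟩ with ha
  have haC : a ∈ C j := (C j).min'_mem _
  have hna : n a = n j := by simpa [hC] using haC
  have haj : a ≤ j := hleJ a haC
  have hcontig : ∀ i : Fin k, a ≤ i → i ≤ j → n i = n j :=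
    fun i h1 h2 => le_antisymm (hna ▸ hord a i h1) (hord i j h2)
  have hCIcc : C j = Finset.Icc a j := by
    ext i
    simp only [Finset.mem_Icc]
    constructor
    · intro hi; exact ⟨(C j).min'_le i hi, hleJ i hi⟩
    · rintro ⟨h1, h2⟩; simp [hC, hcontig i h1 h2]
  have hcard : (C j).card = (j:ℕ) + 1 - (a:ℕ) := by
    rw [hCIcc, Fin.card_Icc]
  -- reindex the sum
  have hsum1 : ∑ i ∈ C j, D i = (∑ i ∈ C j, (q:ℂ)^((j:ℕ) - (i:ℕ))) * D j := by
    rw [Finset.sum_mul]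
    refine Finset.sum_congr rfl ?_
    intro i hi
    exact key ((j:ℕ) - (i:ℕ)) i j (by have := hleJ i hi; rw [Fin.le_def] at this; omega)
      (by simpa [hC] using hi)
  have hsum2 : ∑ i ∈ C j, (q:ℂ)^((j:ℕ) - (i:ℕ))
      = ∑ t ∈ Finset.range ((C j).card), (q:ℂ)^t := by
    rw [hCIcc]
    refine Finset.sum_nbij' (fun i => (j:ℕ) - (i:ℕ))
      (fun t => ⟨(j:ℕ) - t, by have := j.isLt; omega⟩) ?_ ?_ ?_ ?_ ?_
    · intro i hi
      simp only [Finset.mem_Icc] at hi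
      have h1 := hi.1; have h2 := hi.2
      rw [Fin.le_def] at h1 h2
      simp only [Finset.mem_range, hcard, hCIcc, Fin.card_Icc]
      omega
    · intro t ht
      simp only [Finset.mem_range, hcard, hCIcc, Fin.card_Icc] at ht
      have haj' : (a:ℕ) ≤ (j:ℕ) := haj
      refine Finset.mem_Icc.mpr ⟨?_, ?_⟩ <;>
        · rw [Fin.le_def]; simp only [Fin.val_mk]; omega
    · intro i hi
      simp only [Finset.mem_Icc] at hi
      have h2 := hi.2; rw [Fin.le_def] at h2
      apply Fin.ext; simp; omega
    · intro t ht
      simp only [Finset.mem_range, hcard, hCIcc, Fin.card_Icc] at ht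
      simp; omega
    · intro i hi; rfl
  rw [hsum1, hsum2, ← mul_assoc]
  congr 1
  have := geom_sum_mul (q:ℂ) ((C j).card)
  -- (∑ q^i) * (q - 1) = q^c - 1
  linear_combination -this
end
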